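/- Let ℓᵃ : ℝ × ℝ → ℝ be a p-distance (ℓᵃ(y,y') ≥ 0 for all y, y', and ℓᵃ(y,y') = 0 if and only if y = y') such that all relevant integrands below are measurable. Let Q and P be Borel probability measures on ℝ, both absolutely continuous with respect to Lebesgue measure, with supp(Q) = [a,b] and supp(P) = [c,d] where a < b ≤ c < d. Let L > 0, let H be the set of all L-Lipschitz functions ℝ → ℝ, let f : ℝ → ℝ be L-Lipschitz, and let ε ≥ 0. Then for every K > 0 there exists a measurable function g : ℝ → ℝ such that ∫ (f(x) − g(x))² dQ(x) ≤ ε, the infimum over h ∈ H of ∫ ℓᵃ(g(x), h(x)) dP(x) is attained, and every h ∈ H attaining this infimum satisfies ∫ (f(x) − h(x))² dQ(x) ≥ K. (In particular, the optimal value of the expected BODAME problem with squared losses ℓᵒ = ℓᶜ and unrestricted surrogate class G is +∞.) -/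

import Mathlib

open MeasureTheory

/-- The topological support of a Borel measure: the set of points all of whose
open neighborhoods have positive measure. -/
def measureSupport {X : Type*} [TopologicalSpace X] [MeasurableSpace X]
    (μ : Measure X) : Set X :=
  {x | ∀ U ∈ nhds x, 0 < μ U}

/-! Shift `f` by a constant `M` exactly on `[c, ∞)`. The resulting surrogate `g` equals `f`
`Q`-a.e. (as `supp Q ⊆ (-∞, c]` and `Q {c} = 0`), so it is feasible, and equals the `L`-Lipschitz
function `f + M` on `supp P`, so the attacker's loss attains its minimum `0` there. Any minimiser
`h` then agrees with `f + M` `P`-a.e., hence, both being continuous, at `c ∈ supp P`. Since `h`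
and `f` are `L`-Lipschitz, `h - f ≥ M - 2L(c - a)` on `[a, b] = supp Q`, and `M` is chosen to make
this `√K`. -/

open Set

theorem measureSupport_eq_support {X : Type*} [TopologicalSpace X] [MeasurableSpace X]
    (μ : Measure X) : measureSupport μ = μ.support :=
  Set.ext fun x => (Measure.mem_support_iff_forall x).symm

theorem MeasureTheory.Measure.eqOn_support_of_ae_eq {X Y : Type*} [TopologicalSpace X]
    [MeasurableSpace X] [TopologicalSpace Y] [T2Space Y] {μ : Measure X} {u v : X → Y}
    (hu : Continuous u) (hv : Continuous v) (h : u =ᵐ[μ] v) : EqOn u v μ.support :=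
  Measure.support_subset_of_isClosed (isClosed_eq hu hv) h

theorem ae_lt_of_support_subset_Iic {μ : Measure ℝ} (hμ : μ ≪ volume) {c : ℝ}
    (h : μ.support ⊆ Iic c) : ∀ᵐ x ∂μ, x < c := by
  filter_upwards [Measure.support_mem_ae,
    compl_mem_ae_iff.mpr (hμ (Real.volume_singleton (a := c)))] with x hx hxc
  exact (h hx).lt_of_ne hxc

theorem le_lintegral_of_forall_mem_support {X : Type*} [TopologicalSpace X]
    [HereditarilyLindelofSpace X] [MeasurableSpace X] {μ : Measure X} [IsProbabilityMeasure μ]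
    {F : X → ENNReal} {r : ENNReal} (h : ∀ x ∈ μ.support, r ≤ F x) : r ≤ ∫⁻ x, F x ∂μ :=
  calc r = ∫⁻ _, r ∂μ := by simp
    _ ≤ ∫⁻ x, F x ∂μ := lintegral_mono_ae <| by
      filter_upwards [Measure.support_mem_ae] with x hx using h x hx

section Loss

variable {X : Type*} [MeasurableSpace X] {μ : Measure X} {ℓ : ℝ → ℝ → ℝ} {u v : X → ℝ}

theorem lintegral_ofReal_eq_zero_of_ae_eq (hℓ : ∀ y, ℓ y y = 0) (h : u =ᵐ[μ] v) :
    ∫⁻ x, ENNReal.ofReal (ℓ (u x) (v x)) ∂μ = 0 :=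
  (lintegral_congr_ae (h.mono fun x hx => by simp [hx, hℓ])).trans lintegral_zero

theorem ae_eq_of_lintegral_ofReal_eq_zero (hℓ_nonneg : ∀ y y', 0 ≤ ℓ y y')
    (hℓ_eq : ∀ y y', ℓ y y' = 0 → y = y') (hℓ : Measurable (Function.uncurry ℓ))
    (hu : Measurable u) (hv : Measurable v)
    (h : ∫⁻ x, ENNReal.ofReal (ℓ (u x) (v x)) ∂μ = 0) :
    u =ᵐ[μ] v := by
  filter_upwards [(lintegral_eq_zero_iff (hℓ.comp (hu.prodMk hv)).ennreal_ofReal).mp h]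
    with x hx
  exact hℓ_eq _ _ (le_antisymm (ENNReal.ofReal_eq_zero.mp hx) (hℓ_nonneg _ _))

end Loss

section Lipschitz

variable {L : ℝ} {u v : ℝ → ℝ}

theorem continuous_of_abs_sub_le_mul (hu : ∀ x y, |u x - u y| ≤ L * |x - y|) : Continuous u :=
  (LipschitzWith.of_dist_le' (K := L) fun x y => by
    simpa only [Real.dist_eq] using hu x y).continuous

theorem abs_sub_sub_sub_le_mul (hu : ∀ x y, |u x - u y| ≤ L * |x - y|)
    (hv : ∀ x y, |v x - v y| ≤ L * |x - y|) (x y : ℝ) :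
    |(u x - v x) - (u y - v y)| ≤ 2 * L * |x - y| := by
  rw [show (u x - v x) - (u y - v y) = (u x - u y) - (v x - v y) by ring]
  linarith [abs_sub (u x - u y) (v x - v y), hu x y, hv x y]

theorem le_sq_sub_of_eq_add {a c K : ℝ} (hu : ∀ x y, |u x - u y| ≤ L * |x - y|)
    (hv : ∀ x y, |v x - v y| ≤ L * |x - y|) (hc : v c = u c + (2 * L * (c - a) + √K))
    {x : ℝ} (hx : x ∈ Icc a c) : K ≤ (u x - v x) ^ 2 := by
  have hL : 0 ≤ L := (abs_nonneg _).trans (by simpa using hu 1 0)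
  have hgap := abs_sub_sub_sub_le_mul hv hu x c
  rw [abs_sub_comm x c, abs_of_nonneg (sub_nonneg.mpr hx.2), hc] at hgap
  have hdist : L * (c - x) ≤ L * (c - a) := mul_le_mul_of_nonneg_left (by linarith [hx.1]) hL
  have hsqrt : √K ≤ v x - u x := by linarith [(abs_le.mp hgap).1]
  rw [sub_sq_comm]
  exact (Real.sqrt_le_iff.mp hsqrt).2

end Lipschitz

theorem bodame_infinite_optimal_value_general
    (ℓa : ℝ → ℝ → ℝ)
    (hℓa_nonneg : ∀ y y', 0 ≤ ℓa y y')
    (hℓa_zero : ∀ y y', ℓa y y' = 0 ↔ y = y')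
    (hℓa_meas : Measurable (Function.uncurry ℓa))
    (Q P : Measure ℝ) [IsProbabilityMeasure Q]
    (hQac : Q ≪ MeasureTheory.volume)
    (a b c d : ℝ) (hbc : b ≤ c) (hcd : c < d)
    (hQsupp : measureSupport Q = Set.Icc a b)
    (hPsupp : measureSupport P = Set.Icc c d)
    (L : ℝ)
    (f : ℝ → ℝ) (hf : ∀ x y, |f x - f y| ≤ L * |x - y|)
    (ε : ℝ) (K : ℝ) :
    ∃ g : ℝ → ℝ, Measurable g ∧
      -- the surrogate is feasible: constraint value at most ε
      (∫⁻ x, ENNReal.ofReal ((f x - g x) ^ 2) ∂Q) ≤ ENNReal.ofReal ε ∧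
      -- the attacker's infimum over the L-Lipschitz class is attained
      (∃ h₀ : ℝ → ℝ, (∀ x y, |h₀ x - h₀ y| ≤ L * |x - y|) ∧
        ∀ h' : ℝ → ℝ, (∀ x y, |h' x - h' y| ≤ L * |x - y|) →
          ∫⁻ x, ENNReal.ofReal (ℓa (g x) (h₀ x)) ∂P
            ≤ ∫⁻ x, ENNReal.ofReal (ℓa (g x) (h' x)) ∂P) ∧
      -- every attacker model attaining the infimum has objective value at least K
      (∀ h : ℝ → ℝ, (∀ x y, |h x - h y| ≤ L * |x - y|) →
        (∀ h' : ℝ → ℝ, (∀ x y, |h' x - h' y| ≤ L * |x - y|) →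
          ∫⁻ x, ENNReal.ofReal (ℓa (g x) (h x)) ∂P
            ≤ ∫⁻ x, ENNReal.ofReal (ℓa (g x) (h' x)) ∂P) →
        ENNReal.ofReal K ≤ ∫⁻ x, ENNReal.ofReal ((f x - h x) ^ 2) ∂Q) := by
  rw [measureSupport_eq_support] at hQsupp hPsupp
  set h₀ : ℝ → ℝ := fun x => f x + (2 * L * (c - a) + √K)
  have hh₀ : ∀ x y, |h₀ x - h₀ y| ≤ L * |x - y| := fun x y => by simpa [h₀] using hf x y
  have hh₀c := continuous_of_abs_sub_le_mul hh₀
  set g : ℝ → ℝ := fun x => if c ≤ x then h₀ x else f x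
  have hg : Measurable g :=
    hh₀c.measurable.ite measurableSet_Ici (continuous_of_abs_sub_le_mul hf).measurable
  have hfg : f =ᵐ[Q] g := by
    filter_upwards [ae_lt_of_support_subset_Iic hQac (hQsupp ▸ Icc_subset_Iic_self.trans
      (Iic_subset_Iic.mpr hbc))] with x hx
    simp [g, hx.not_ge]
  have hgh₀ : g =ᵐ[P] h₀ := by
    filter_upwards [Measure.support_mem_ae] with x hx
    simp [g, (hPsupp ▸ hx : x ∈ Icc c d).1]
  have hmin₀ : ∫⁻ x, ENNReal.ofReal (ℓa (g x) (h₀ x)) ∂P = 0 :=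
    lintegral_ofReal_eq_zero_of_ae_eq (fun y => (hℓa_zero y y).mpr rfl) hgh₀
  refine ⟨g, hg, ?_, ⟨h₀, hh₀, fun _ _ => hmin₀ ▸ zero_le⟩, fun h hh hmin => ?_⟩
  · rw [lintegral_ofReal_eq_zero_of_ae_eq (ℓ := fun y y' => (y - y') ^ 2) (by simp) hfg]
    exact zero_le
  have hhc := continuous_of_abs_sub_le_mul hh
  have hgh : g =ᵐ[P] h := ae_eq_of_lintegral_ofReal_eq_zero hℓa_nonneg
    (fun y y' => (hℓa_zero y y').mp) hℓa_meas hg hhc.measurable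
    (le_antisymm (hmin₀ ▸ hmin h₀ hh₀) zero_le)
  have hc : h c = h₀ c := Measure.eqOn_support_of_ae_eq hhc hh₀c (hgh.symm.trans hgh₀)
    (hPsupp ▸ ⟨le_rfl, hcd.le⟩ : c ∈ P.support)
  refine le_lintegral_of_forall_mem_support fun x hx => ENNReal.ofReal_le_ofReal ?_
  rw [hQsupp] at hx
  exact le_sq_sub_of_eq_add hf hh hc ⟨hx.1, hx.2.trans hbc⟩

/-- **Sufficient condition for infinitely large optimal value (Theorem 2).**
With squared objective/constraint losses, a p-distance attacker loss `ℓᵃ`,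
absolutely continuous `Q`, `P` with `supp Q = [a,b]`, `supp P = [c,d]`,
`a < b ≤ c < d`, `L`-Lipschitz true model `f` and attacker class `H` (the set of
all `L`-Lipschitz functions), and unrestricted measurable surrogate class:
for every `K > 0` there is a feasible surrogate `g` (constraint value `≤ ε`)
such that the attacker's infimum is attained, and every attacker model attaining
it has objective value `≥ K`.  Hence the optimal value of expected BODAME is `∞`.
Integrals of the nonnegative losses are taken as lower integrals of `ENNReal.ofReal`. -/
theorem bodame_infinite_optimal_value
    (ℓa : ℝ → ℝ → ℝ)
    (hℓa_nonneg : ∀ y y', 0 ≤ ℓa y y')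
    (hℓa_zero : ∀ y y', ℓa y y' = 0 ↔ y = y')
    (hℓa_meas : Measurable (Function.uncurry ℓa))
    (Q P : Measure ℝ) [IsProbabilityMeasure Q] [IsProbabilityMeasure P]
    (hQac : Q ≪ MeasureTheory.volume) (hPac : P ≪ MeasureTheory.volume)
    (a b c d : ℝ) (hab : a < b) (hbc : b ≤ c) (hcd : c < d)
    (hQsupp : measureSupport Q = Set.Icc a b)
    (hPsupp : measureSupport P = Set.Icc c d)
    (L : ℝ) (hL : 0 < L)
    (f : ℝ → ℝ) (hf : ∀ x y, |f x - f y| ≤ L * |x - y|)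
    (ε : ℝ) (hε : 0 ≤ ε) (K : ℝ) (hK : 0 < K) :
    ∃ g : ℝ → ℝ, Measurable g ∧
      -- the surrogate is feasible: constraint value at most ε
      (∫⁻ x, ENNReal.ofReal ((f x - g x) ^ 2) ∂Q) ≤ ENNReal.ofReal ε ∧
      -- the attacker's infimum over the L-Lipschitz class is attained
      (∃ h₀ : ℝ → ℝ, (∀ x y, |h₀ x - h₀ y| ≤ L * |x - y|) ∧
        ∀ h' : ℝ → ℝ, (∀ x y, |h' x - h' y| ≤ L * |x - y|) →
          ∫⁻ x, ENNReal.ofReal (ℓa (g x) (h₀ x)) ∂P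
            ≤ ∫⁻ x, ENNReal.ofReal (ℓa (g x) (h' x)) ∂P) ∧
      -- every attacker model attaining the infimum has objective value at least K
      (∀ h : ℝ → ℝ, (∀ x y, |h x - h y| ≤ L * |x - y|) →
        (∀ h' : ℝ → ℝ, (∀ x y, |h' x - h' y| ≤ L * |x - y|) →
          ∫⁻ x, ENNReal.ofReal (ℓa (g x) (h x)) ∂P
            ≤ ∫⁻ x, ENNReal.ofReal (ℓa (g x) (h' x)) ∂P) →
        ENNReal.ofReal K ≤ ∫⁻ x, ENNReal.ofReal ((f x - h x) ^ 2) ∂Q) :=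
  bodame_infinite_optimal_value_general ℓa hℓa_nonneg hℓa_zero hℓa_meas Q P hQac a b c d hbc hcd
    hQsupp hPsupp L f hf ε K
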